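/- arXiv:0903.5400 — 3 statements merged into one kernel-verified Lean document; each statement's English description precedes it below -/
import Mathlib

section
/- (Discriminant Test) Let D ⊆ ℝ², let p be an interior point of D, and let f : D → ℝ have continuous partial derivatives of first and second order in an open neighborhood of p. If ∇f(p) = 0 and the discriminant Δf(p) := f_xx(p)·f_yy(p) − f_xy(p)² is negative, then f has a strict saddle point at p. -/
open Set Filter Topology

/-- `γ : [a, b] → D` is a regular path in `D`: it is continuous on `[a, b]`, maps `[a, b]`
into `D`, is differentiable on `(a, b)`, and its derivative is nonvanishing on `(a, b)`. -/
def IsRegularPath (D : Set (ℝ × ℝ)) (γ : ℝ → ℝ × ℝ) (a b : ℝ) : Prop :=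
  a < b ∧ ContinuousOn γ (Set.Icc a b) ∧ Set.MapsTo γ (Set.Icc a b) D ∧
    ∀ t ∈ Set.Ioo a b, DifferentiableAt ℝ γ t ∧ deriv γ t ≠ 0

/-- A function of one real variable has a strict local maximum at `t`. -/
def IsStrictLocalMax (g : ℝ → ℝ) (t : ℝ) : Prop :=
  ∀ᶠ s in 𝓝[≠] t, g s < g t

/-- A function of one real variable has a strict local minimum at `t`. -/
def IsStrictLocalMin (g : ℝ → ℝ) (t : ℝ) : Prop :=
  ∀ᶠ s in 𝓝[≠] t, g t < g s

/-- `f` has a saddle point at `p`: there are regular paths `γ₁, γ₂` in `D` passing through `p`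
and intersecting transversally at `p` (their tangent vectors at `p` are not multiples of each
other) such that `f` has a local maximum at `p` along `γ₁` and a local minimum at `p`
along `γ₂`. -/
def HasSaddleAt (D : Set (ℝ × ℝ)) (f : ℝ × ℝ → ℝ) (p : ℝ × ℝ) : Prop :=
  ∃ (a₁ b₁ a₂ b₂ t₁ t₂ : ℝ) (γ₁ γ₂ : ℝ → ℝ × ℝ),
    IsRegularPath D γ₁ a₁ b₁ ∧ IsRegularPath D γ₂ a₂ b₂ ∧
    t₁ ∈ Set.Ioo a₁ b₁ ∧ t₂ ∈ Set.Ioo a₂ b₂ ∧ γ₁ t₁ = p ∧ γ₂ t₂ = p ∧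
    (∀ c : ℝ, deriv γ₁ t₁ ≠ c • deriv γ₂ t₂) ∧
    (∀ c : ℝ, deriv γ₂ t₂ ≠ c • deriv γ₁ t₁) ∧
    IsLocalMax (f ∘ γ₁) t₁ ∧ IsLocalMin (f ∘ γ₂) t₂

/-- `f` has a strict saddle point at `p`: as for a saddle point, but with a strict local
maximum along `γ₁` and a strict local minimum along `γ₂`. -/
def HasStrictSaddleAt (D : Set (ℝ × ℝ)) (f : ℝ × ℝ → ℝ) (p : ℝ × ℝ) : Prop :=
  ∃ (a₁ b₁ a₂ b₂ t₁ t₂ : ℝ) (γ₁ γ₂ : ℝ → ℝ × ℝ),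
    IsRegularPath D γ₁ a₁ b₁ ∧ IsRegularPath D γ₂ a₂ b₂ ∧
    t₁ ∈ Set.Ioo a₁ b₁ ∧ t₂ ∈ Set.Ioo a₂ b₂ ∧ γ₁ t₁ = p ∧ γ₂ t₂ = p ∧
    (∀ c : ℝ, deriv γ₁ t₁ ≠ c • deriv γ₂ t₂) ∧
    (∀ c : ℝ, deriv γ₂ t₂ ≠ c • deriv γ₁ t₁) ∧
    IsStrictLocalMax (f ∘ γ₁) t₁ ∧ IsStrictLocalMin (f ∘ γ₂) t₂

/-- The second partial derivative `f_xx` at `p`. -/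
noncomputable def fxx (f : ℝ × ℝ → ℝ) (p : ℝ × ℝ) : ℝ :=
  fderiv ℝ (fun q => fderiv ℝ f q (1, 0)) p (1, 0)

/-- The mixed second partial derivative `f_xy` at `p`. -/
noncomputable def fxy (f : ℝ × ℝ → ℝ) (p : ℝ × ℝ) : ℝ :=
  fderiv ℝ (fun q => fderiv ℝ f q (1, 0)) p (0, 1)

/-- The second partial derivative `f_yy` at `p`. -/
noncomputable def fyy (f : ℝ × ℝ → ℝ) (p : ℝ × ℝ) : ℝ :=
  fderiv ℝ (fun q => fderiv ℝ f q (0, 1)) p (0, 1)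

/-- The Hessian form `Q_p(h) = f_xx(p) h₁² + 2 f_xy(p) h₁ h₂ + f_yy(p) h₂²` of `f` at `p`. -/
noncomputable def hessianForm (f : ℝ × ℝ → ℝ) (p h : ℝ × ℝ) : ℝ :=
  fxx f p * h.1 ^ 2 + 2 * fxy f p * h.1 * h.2 + fyy f p * h.2 ^ 2

/-!
Along the line `t ↦ p + t • v` the function `f` has derivative `0` at `t = 0` (as `∇f(p) = 0`)
and second derivative `Q(v)`, the Hessian form of `f` at `p`. A negative discriminant makes `Q`
indefinite, so there are directions `v`, `w` with `Q(v) < 0 < Q(w)`; by the one-variable second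
derivative test, whose strict form follows from the mean value theorem, `f` has a strict local
maximum along the line through `v` and a strict local minimum along the line through `w`. These
lines are transversal because `Q(c • w) = c² Q(w)` never has the sign of `Q(v)`.
-/
theorem isStrictLocalMax_of_hasDerivAt {g g' : ℝ → ℝ} {t₀ : ℝ}
    (hg : ∀ᶠ t in 𝓝 t₀, HasDerivAt g (g' t) t)
    (hsign : ∀ᶠ t in 𝓝[≠] t₀, g' t * (t - t₀) < 0) : IsStrictLocalMax g t₀ := by
  rw [eventually_nhdsWithin_iff] at hsign
  obtain ⟨ε, hε, hball⟩ := (nhds_basis_Ioo_pos t₀).eventually_iff.1 (hg.and hsign)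
  have hmvt : ∀ a b, a < b → Icc a b ⊆ Ioo (t₀ - ε) (t₀ + ε) →
      ∃ c ∈ Ioo a b, g b - g a = g' c * (b - a) := by
    intro a b hab hsub
    have hderiv : ∀ x ∈ Icc a b, HasDerivAt g (g' x) x := fun x hx ↦ (hball (hsub hx)).1
    obtain ⟨c, hc, hslope⟩ := exists_hasDerivAt_eq_slope g g' hab
      (fun x hx ↦ (hderiv x hx).continuousAt.continuousWithinAt)
      (fun x hx ↦ hderiv x (Ioo_subset_Icc_self hx))
    exact ⟨c, hc, by rw [hslope, div_mul_cancel₀ _ (sub_ne_zero.2 hab.ne')]⟩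
  have hIoo : Ioo (t₀ - ε) (t₀ + ε) ∈ 𝓝 t₀ :=
    Ioo_mem_nhds (sub_lt_self t₀ hε) (lt_add_of_pos_right t₀ hε)
  filter_upwards [nhdsWithin_le_nhds hIoo, self_mem_nhdsWithin] with s hs hne
  rcases lt_or_gt_of_ne hne with hlt | hgt
  · obtain ⟨c, hc, hdiff⟩ := hmvt s t₀ hlt (Icc_subset_Ioo hs.1 (by linarith))
    have := (hball ⟨by linarith [hs.1, hc.1], by linarith [hc.2]⟩).2 hc.2.ne
    nlinarith [hc.1, hc.2]
  · obtain ⟨c, hc, hdiff⟩ := hmvt t₀ s hgt (Icc_subset_Ioo (by linarith) hs.2)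
    have := (hball ⟨by linarith [hc.1], by linarith [hs.2, hc.2]⟩).2 hc.1.ne'
    nlinarith [hc.1, hc.2]

theorem isStrictLocalMax_of_hasDerivAt_of_hasDerivAt_neg {g g' : ℝ → ℝ} {t₀ q : ℝ}
    (hg : ∀ᶠ t in 𝓝 t₀, HasDerivAt g (g' t) t) (hg₀ : g' t₀ = 0)
    (hg' : HasDerivAt g' q t₀) (hq : q < 0) : IsStrictLocalMax g t₀ := by
  refine isStrictLocalMax_of_hasDerivAt hg ?_
  filter_upwards [(hasDerivAt_iff_tendsto_slope.1 hg').eventually (gt_mem_nhds hq),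
    self_mem_nhdsWithin] with t hslope hne
  have ht : t - t₀ ≠ 0 := sub_ne_zero.2 hne
  rw [slope_def_field, hg₀, sub_zero] at hslope
  calc g' t * (t - t₀) = g' t / (t - t₀) * (t - t₀) ^ 2 := by field_simp
    _ < 0 := mul_neg_of_neg_of_pos hslope (by positivity)

theorem isStrictLocalMin_of_hasDerivAt_of_hasDerivAt_pos {g g' : ℝ → ℝ} {t₀ q : ℝ}
    (hg : ∀ᶠ t in 𝓝 t₀, HasDerivAt g (g' t) t) (hg₀ : g' t₀ = 0)
    (hg' : HasDerivAt g' q t₀) (hq : 0 < q) : IsStrictLocalMin g t₀ := by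
  have := isStrictLocalMax_of_hasDerivAt_of_hasDerivAt_neg (hg.mono fun _ h ↦ h.neg)
    (by simp [hg₀]) hg'.neg (neg_lt_zero.2 hq)
  filter_upwards [this] with s hs
  simpa using hs

section Line

variable {E : Type*} [NormedAddCommGroup E] [NormedSpace ℝ E]

theorem hasDerivAt_line (p v : E) (t : ℝ) : HasDerivAt (fun s : ℝ ↦ p + s • v) v t := by
  simpa using ((hasDerivAt_id t).smul_const v).const_add p

theorem tendsto_line (p v : E) : Tendsto (fun t : ℝ ↦ p + t • v) (𝓝 0) (𝓝 p) := by
  simpa using (hasDerivAt_line p v 0).continuousAt.tendsto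

variable {f : E → ℝ} {p : E}

theorem ContDiffAt.eventually_hasDerivAt_comp_line (hf : ContDiffAt ℝ 2 f p) (v : E) :
    ∀ᶠ t in 𝓝 (0 : ℝ), HasDerivAt (fun s ↦ f (p + s • v)) (fderiv ℝ f (p + t • v) v) t := by
  filter_upwards [(tendsto_line p v).eventually (hf.eventually (by simp))] with t ht
  exact (ht.differentiableAt two_ne_zero).hasFDerivAt.comp_hasDerivAt t (hasDerivAt_line p v t)

theorem ContDiffAt.hasDerivAt_fderiv_apply_comp_line (hf : ContDiffAt ℝ 2 f p) (v : E) :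
    HasDerivAt (fun t : ℝ ↦ fderiv ℝ f (p + t • v) v) (fderiv ℝ (fderiv ℝ f) p v v) 0 := by
  have hf' : HasFDerivAt (fderiv ℝ f) (fderiv ℝ (fderiv ℝ f) p) (p + (0 : ℝ) • v) := by
    simpa using ((hf.fderiv_right (m := 1) le_rfl).differentiableAt one_ne_zero).hasFDerivAt
  simpa [Function.comp_def] using
    (hf'.clm_apply (hasFDerivAt_const v _)).comp_hasDerivAt 0 (hasDerivAt_line p v 0)

theorem ContDiffAt.isStrictLocalMax_comp_line (hf : ContDiffAt ℝ 2 f p)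
    (hgrad : fderiv ℝ f p = 0) {v : E} (hv : fderiv ℝ (fderiv ℝ f) p v v < 0) :
    IsStrictLocalMax (fun t : ℝ ↦ f (p + t • v)) 0 :=
  isStrictLocalMax_of_hasDerivAt_of_hasDerivAt_neg (hf.eventually_hasDerivAt_comp_line v)
    (by simp [hgrad]) (hf.hasDerivAt_fderiv_apply_comp_line v) hv

theorem ContDiffAt.isStrictLocalMin_comp_line (hf : ContDiffAt ℝ 2 f p)
    (hgrad : fderiv ℝ f p = 0) {v : E} (hv : 0 < fderiv ℝ (fderiv ℝ f) p v v) :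
    IsStrictLocalMin (fun t : ℝ ↦ f (p + t • v)) 0 :=
  isStrictLocalMin_of_hasDerivAt_of_hasDerivAt_pos (hf.eventually_hasDerivAt_comp_line v)
    (by simp [hgrad]) (hf.hasDerivAt_fderiv_apply_comp_line v) hv

end Line

theorem exists_isRegularPath_line {D : Set (ℝ × ℝ)} {p v : ℝ × ℝ} (hD : D ∈ 𝓝 p) (hv : v ≠ 0) :
    ∃ δ > 0, IsRegularPath D (fun t ↦ p + t • v) (-δ) δ := by
  obtain ⟨δ, hδ, hball⟩ :=
    Metric.nhds_basis_closedBall.eventually_iff.1 ((tendsto_line p v).eventually hD)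
  refine ⟨δ, hδ, by linarith, fun t _ ↦ (hasDerivAt_line p v t).continuousAt.continuousWithinAt,
    fun t ht ↦ hball ?_, fun t _ ↦ ⟨(hasDerivAt_line p v t).differentiableAt, ?_⟩⟩
  · simpa [Real.closedBall_eq_Icc] using ht
  · rwa [(hasDerivAt_line p v t).deriv]

theorem exists_quadratic_neg_of_discr_neg {A B C : ℝ} (h : A * C - B ^ 2 < 0) :
    ∃ x y : ℝ, A * x ^ 2 + 2 * B * x * y + C * y ^ 2 < 0 := by
  -- At `(-B, A)` the form equals `A (AC - B²)`; at `(-(C + 1), 2B)` with `A = 0` it is `-4B²`.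
  rcases lt_trichotomy A 0 with hA | rfl | hA
  · exact ⟨1, 0, by simpa⟩
  · exact ⟨-(C + 1), 2 * B, by nlinarith⟩
  · exact ⟨-B, A, by nlinarith⟩

section HessianForm

variable {f : ℝ × ℝ → ℝ} {p : ℝ × ℝ}

theorem ContDiffAt.fderiv_fderiv_apply_self_eq_hessianForm (hf : ContDiffAt ℝ 2 f p)
    (h : ℝ × ℝ) : fderiv ℝ (fderiv ℝ f) p h h = hessianForm f p h := by
  have hd : DifferentiableAt ℝ (fderiv ℝ f) p :=
    (hf.fderiv_right (m := 1) le_rfl).differentiableAt one_ne_zero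
  have hpartial :
      ∀ u w, fderiv ℝ (fun q ↦ fderiv ℝ f q u) p w = fderiv ℝ (fderiv ℝ f) p w u := by
    intro u w
    simp [fderiv_clm_apply hd (differentiableAt_const u)]
  have hsymm := hf.isSymmSndFDerivAt (by simp) (1, 0) (0, 1)
  have hh : h = h.1 • ((1 : ℝ), (0 : ℝ)) + h.2 • ((0 : ℝ), (1 : ℝ)) := by ext <;> simp
  rw [hessianForm, fxx, fxy, fyy, hpartial, hpartial, hpartial]
  conv_lhs => rw [hh]
  simp only [map_add, map_smul, add_apply, smul_apply, smul_eq_mul, hsymm]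
  ring

theorem exists_hessianForm_neg (h : fxx f p * fyy f p - fxy f p ^ 2 < 0) :
    ∃ v, hessianForm f p v < 0 := by
  obtain ⟨x, y, hxy⟩ := exists_quadratic_neg_of_discr_neg h
  exact ⟨(x, y), hxy⟩

theorem exists_hessianForm_pos (h : fxx f p * fyy f p - fxy f p ^ 2 < 0) :
    ∃ w, 0 < hessianForm f p w := by
  obtain ⟨x, y, hxy⟩ :=
    exists_quadratic_neg_of_discr_neg (A := -fxx f p) (B := -fxy f p) (C := -fyy f p) (by linarith)
  exact ⟨(x, y), by rw [hessianForm]; linarith⟩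

theorem hessianForm_smul (c : ℝ) (h : ℝ × ℝ) :
    hessianForm f p (c • h) = c ^ 2 * hessianForm f p h := by
  simp only [hessianForm, Prod.smul_fst, Prod.smul_snd, smul_eq_mul]
  ring

theorem ne_smul_of_hessianForm_mul_neg {v w : ℝ × ℝ}
    (h : hessianForm f p v * hessianForm f p w < 0) (c : ℝ) : v ≠ c • w := by
  rintro rfl
  rw [hessianForm_smul] at h
  nlinarith [mul_nonneg (sq_nonneg c) (sq_nonneg (hessianForm f p w))]

end HessianForm

theorem discriminant_test_general (D U : Set (ℝ × ℝ)) (p : ℝ × ℝ) (f : ℝ × ℝ → ℝ)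
    (hp : p ∈ interior D) (hU : IsOpen U) (hpU : p ∈ U)
    (hf : ContDiffOn ℝ 2 f U) (hgrad : fderiv ℝ f p = 0)
    (hdisc : fxx f p * fyy f p - fxy f p ^ 2 < 0) :
    HasStrictSaddleAt D f p := by
  have hf₂ : ContDiffAt ℝ 2 f p := hf.contDiffAt (hU.mem_nhds hpU)
  obtain ⟨v, hv⟩ := exists_hessianForm_neg hdisc
  obtain ⟨w, hw⟩ := exists_hessianForm_pos hdisc
  have hvw : hessianForm f p v * hessianForm f p w < 0 := mul_neg_of_neg_of_pos hv hw
  have hwv : hessianForm f p w * hessianForm f p v < 0 := by rwa [mul_comm]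
  have hD : D ∈ 𝓝 p := mem_interior_iff_mem_nhds.1 hp
  obtain ⟨δ₁, hδ₁, hγ₁⟩ :=
    exists_isRegularPath_line hD (by simpa using ne_smul_of_hessianForm_mul_neg hvw 0)
  obtain ⟨δ₂, hδ₂, hγ₂⟩ :=
    exists_isRegularPath_line hD (by simpa using ne_smul_of_hessianForm_mul_neg hwv 0)
  refine ⟨-δ₁, δ₁, -δ₂, δ₂, 0, 0, _, _, hγ₁, hγ₂, ⟨neg_lt_zero.2 hδ₁, hδ₁⟩,
    ⟨neg_lt_zero.2 hδ₂, hδ₂⟩, by simp, by simp, ?_, ?_, ?_, ?_⟩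
  · simpa only [(hasDerivAt_line p _ _).deriv] using ne_smul_of_hessianForm_mul_neg hvw
  · simpa only [(hasDerivAt_line p _ _).deriv] using ne_smul_of_hessianForm_mul_neg hwv
  · exact hf₂.isStrictLocalMax_comp_line hgrad
      (by rwa [hf₂.fderiv_fderiv_apply_self_eq_hessianForm])
  · exact hf₂.isStrictLocalMin_comp_line hgrad
      (by rwa [hf₂.fderiv_fderiv_apply_self_eq_hessianForm])

/-- Discriminant Test: if `f` has continuous first and second order partial derivatives on
an open neighborhood `U ⊆ D` of the interior point `p`, `∇f(p) = 0`, and the discriminant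
`Δf(p) = f_xx(p)·f_yy(p) - f_xy(p)²` is negative, then `f` has a strict saddle point at `p`. -/
theorem discriminant_test (D U : Set (ℝ × ℝ)) (p : ℝ × ℝ) (f : ℝ × ℝ → ℝ)
    (hp : p ∈ interior D) (hU : IsOpen U) (hpU : p ∈ U) (hUD : U ⊆ D)
    (hf : ContDiffOn ℝ 2 f U) (hgrad : fderiv ℝ f p = 0)
    (hdisc : fxx f p * fyy f p - fxy f p ^ 2 < 0) :
    HasStrictSaddleAt D f p :=
  discriminant_test_general D U p f hp hU hpU hf hgrad hdisc
end

section
/- Let m, n be positive integers and define f : ℝ² → ℝ by f(x,y) := x^m + y^n. Then f does not have a saddle point at (0,0). -/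
open Set Filter Topology

/-! Suppose `m ≤ n` (otherwise swap the coordinates); we show that the tangent vectors of the
two paths are parallel. Write `γ = (x, y)` for a path through the origin at time `t`. Along the
maximising path `x^m ≤ -y^n ≤ |y|^n = O(|s - t|^n)`; if `m < n` this forces `x' = 0`, since
`x' ≠ 0` would make `x` positive and of exact order `|s - t|` on one side of `t`. If moreover
`m` is odd, the same argument applied to `-x` on the minimising path makes both tangents
vertical; if `m` is even, then `y^n ≤ -x^m ≤ 0` gives `y ≤ 0`, so `y` is maximal at `t` and the
maximising path has zero velocity. When `m = n` is odd, `x^m + y^m` has the sign of `x + y`,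
which is therefore extremal along both paths, putting both tangents on the line `x + y = 0`;
when `m = n` is even, both `x` and `y` are maximal along the maximising path. -/

section Prod

variable {𝕜 E F : Type*} [NontriviallyNormedField 𝕜] [NormedAddCommGroup E] [NormedSpace 𝕜 E]
  [NormedAddCommGroup F] [NormedSpace 𝕜 F] {γ : 𝕜 → E × F} {v : E × F} {t : 𝕜}

lemma HasDerivAt.fst (h : HasDerivAt γ v t) : HasDerivAt (fun s => (γ s).1) v.1 t :=
  HasFDerivAtFilter.fst h

lemma HasDerivAt.snd (h : HasDerivAt γ v t) : HasDerivAt (fun s => (γ s).2) v.2 t :=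
  HasFDerivAtFilter.snd h

end Prod

lemma Module.Dual.exists_smul_eq_of_apply_eq_zero {K V : Type*} [Field K] [AddCommGroup V]
    [Module K V] [FiniteDimensional K V] (hV : Module.finrank K V = 2) {ℓ : Module.Dual K V}
    (hℓ : ℓ ≠ 0) {v w : V} (hv : ℓ v = 0) (hw : ℓ w = 0) (hw0 : w ≠ 0) :
    ∃ c : K, v = c • w := by
  have hker : Module.finrank K (LinearMap.ker ℓ) = 1 := by
    have := Module.Dual.finrank_ker_add_one_of_ne_zero hℓ
    omega
  obtain ⟨c, hc⟩ := (finrank_eq_one_iff_of_nonzero' (⟨w, hw⟩ : LinearMap.ker ℓ)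
    (by simpa [Subtype.ext_iff] using hw0)).1 hker ⟨v, hv⟩
  exact ⟨c, congrArg Subtype.val hc.symm⟩

section Slope

variable {u w : ℝ → ℝ} {a b t : ℝ}

lemma HasDerivAt.eventually_pos_of_mul_sub_pos (hu : HasDerivAt u a t) (hu0 : u t = 0) :
    ∀ᶠ s in 𝓝[≠] t, 0 < a * (s - t) → 0 < u s := by
  by_cases ha : a = 0
  · exact Eventually.of_forall fun s hs => by simp [ha] at hs
  have hslope : ∀ᶠ s in 𝓝[≠] t, 0 < a * slope u t s :=
    ((hasDerivAt_iff_tendsto_slope.1 hu).const_mul a).eventually_const_lt (mul_self_pos.2 ha)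
  filter_upwards [hslope] with s hs hst
  have hu_eq : u s = (s - t) * slope u t s := by
    simpa [hu0] using (sub_smul_slope u t s).symm
  have : 0 < a ^ 2 * u s := by rw [hu_eq]; nlinarith [mul_pos hs hst]
  exact pos_of_mul_pos_right this (sq_nonneg a)

lemma HasDerivAt.eq_zero_of_abs_pow_le_abs_pow {k K : ℕ} {l : Filter ℝ} [l.NeBot]
    (hl : l ≤ 𝓝[≠] t) (hu : HasDerivAt u a t) (hw : HasDerivAt w b t) (hu0 : u t = 0)
    (hw0 : w t = 0) (hkK : k < K) (hle : ∀ᶠ s in l, |u s| ^ k ≤ |w s| ^ K) : a = 0 := by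
  have hlim_u : Tendsto (fun s => |slope u t s| ^ k) l (𝓝 (|a| ^ k)) :=
    ((hasDerivAt_iff_tendsto_slope.1 hu).mono_left hl).abs.pow k
  have hlim_w : Tendsto (fun s => |slope w t s| ^ K * |s - t| ^ (K - k)) l
      (𝓝 (|b| ^ K * 0)) := by
    refine (((hasDerivAt_iff_tendsto_slope.1 hw).mono_left hl).abs.pow K).mul ?_
    have : Tendsto (fun s => |s - t| ^ (K - k)) (𝓝 t) (𝓝 (|t - t| ^ (K - k))) :=
      (by fun_prop : Continuous fun s : ℝ => |s - t| ^ (K - k)).tendsto t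
    simpa [Nat.sub_ne_zero_of_lt hkK] using this.mono_left (hl.trans nhdsWithin_le_nhds)
  have hbound : ∀ᶠ s in l, |slope u t s| ^ k ≤ |slope w t s| ^ K * |s - t| ^ (K - k) := by
    filter_upwards [hle, hl self_mem_nhdsWithin] with s hs hst
    have hst : 0 < |s - t| := abs_pos.2 (sub_ne_zero.2 hst)
    rw [slope_def_field, slope_def_field, hu0, hw0, sub_zero, sub_zero, abs_div, abs_div,
      div_pow, div_pow, div_le_iff₀ (pow_pos hst k)]
    refine hs.trans_eq ?_
    rw [mul_assoc, ← pow_add, Nat.sub_add_cancel hkK.le, div_mul_cancel₀ _ (pow_pos hst K).ne']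
  have : |a| ^ k ≤ 0 := by simpa using le_of_tendsto_of_tendsto hlim_u hlim_w hbound
  exact abs_eq_zero.1 (eq_zero_of_pow_eq_zero (le_antisymm this (by positivity)))

lemma HasDerivAt.eq_zero_of_pow_le_abs_pow {k K : ℕ} (hu : HasDerivAt u a t)
    (hw : HasDerivAt w b t) (hu0 : u t = 0) (hw0 : w t = 0) (hkK : k < K)
    (hle : ∀ᶠ s in 𝓝 t, u s ^ k ≤ |w s| ^ K) : a = 0 := by
  by_contra ha
  have on_side : ∀ (l : Filter ℝ) [l.NeBot], l ≤ 𝓝[≠] t →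
      (∀ᶠ s in l, 0 < a * (s - t)) → a = 0 := by
    intro l _ hl hside
    refine hu.eq_zero_of_abs_pow_le_abs_pow hl hw hu0 hw0 hkK ?_
    filter_upwards [hl (hu.eventually_pos_of_mul_sub_pos hu0), hside,
      (hl.trans nhdsWithin_le_nhds) hle] with s hpos hside hs
    rwa [abs_of_pos (hpos hside)]
  rcases lt_or_gt_of_ne ha with hneg | hpos
  · exact ha <| on_side (𝓝[<] t) (nhdsWithin_mono _ fun s hs => ne_of_lt hs)
      (eventually_nhdsWithin_of_forall fun s hs => mul_pos_of_neg_of_neg hneg (sub_neg.2 hs))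
  · exact ha <| on_side (𝓝[>] t) (nhdsWithin_mono _ fun s hs => ne_of_gt hs)
      (eventually_nhdsWithin_of_forall fun s hs => mul_pos hpos (sub_pos.2 hs))

end Slope

section PowAddPow

variable {u w : ℝ → ℝ} {a b t : ℝ} {m n : ℕ}

lemma HasDerivAt.eq_zero_of_pow_add_pow_nonpos (hu : HasDerivAt u a t) (hw : HasDerivAt w b t)
    (hu0 : u t = 0) (hw0 : w t = 0) (hmn : m < n)
    (h : ∀ᶠ s in 𝓝 t, u s ^ m + w s ^ n ≤ 0) : a = 0 :=
  hu.eq_zero_of_pow_le_abs_pow hw hu0 hw0 hmn <| h.mono fun s hs => by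
    linarith [neg_le_abs (w s ^ n), abs_pow (w s) n]

lemma HasDerivAt.eq_zero_of_odd_pow_add_pow_nonneg (hm : Odd m) (hu : HasDerivAt u a t)
    (hw : HasDerivAt w b t) (hu0 : u t = 0) (hw0 : w t = 0) (hmn : m < n)
    (h : ∀ᶠ s in 𝓝 t, 0 ≤ u s ^ m + w s ^ n) : a = 0 := by
  refine neg_eq_zero.1 <| hu.neg.eq_zero_of_pow_le_abs_pow hw (by simp [hu0]) hw0 hmn ?_
  filter_upwards [h] with s hs
  rw [Pi.neg_apply, hm.neg_pow]
  linarith [le_abs_self (w s ^ n), abs_pow (w s) n]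

lemma HasDerivAt.eq_zero_of_even_pow_add_pow_nonpos (hm : Even m) (hw : HasDerivAt w b t)
    (hw0 : w t = 0) (h : ∀ᶠ s in 𝓝 t, u s ^ m + w s ^ n ≤ 0) : b = 0 := by
  refine IsLocalMax.hasDerivAt_eq_zero (h.mono fun s hs => ?_) hw
  rw [hw0]
  by_contra! hpos
  linarith [pow_pos hpos n, hm.pow_nonneg (u s)]

lemma HasDerivAt.add_eq_zero_of_odd_pow_add_pow_nonpos (hm : Odd m) (hu : HasDerivAt u a t)
    (hw : HasDerivAt w b t) (hu0 : u t = 0) (hw0 : w t = 0)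
    (h : ∀ᶠ s in 𝓝 t, u s ^ m + w s ^ m ≤ 0) : a + b = 0 := by
  refine IsLocalMax.hasDerivAt_eq_zero (h.mono fun s hs => ?_) (hu.add hw)
  have : u s ^ m ≤ (-w s) ^ m := by rw [hm.neg_pow]; linarith
  have := hm.strictMono_pow.le_iff_le.1 this
  show u s + w s ≤ u t + w t
  linarith

end PowAddPow

section Tangents

variable {m n : ℕ} {γ₁ γ₂ : ℝ → ℝ × ℝ} {t₁ t₂ : ℝ} {v₁ v₂ : ℝ × ℝ}

lemma exists_smul_eq_of_pow_add_pow_nonpos_nonneg_of_le (hmn : m ≤ n)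
    (h₁ : HasDerivAt γ₁ v₁ t₁) (h₂ : HasDerivAt γ₂ v₂ t₂) (hγ₁ : γ₁ t₁ = 0) (hγ₂ : γ₂ t₂ = 0)
    (hv₂ : v₂ ≠ 0) (hmax : ∀ᶠ s in 𝓝 t₁, (γ₁ s).1 ^ m + (γ₁ s).2 ^ n ≤ 0)
    (hmin : ∀ᶠ s in 𝓝 t₂, 0 ≤ (γ₂ s).1 ^ m + (γ₂ s).2 ^ n) : ∃ c : ℝ, v₁ = c • v₂ := by
  have hx₁ : (γ₁ t₁).1 = 0 := by simp [hγ₁]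
  have hy₁ : (γ₁ t₁).2 = 0 := by simp [hγ₁]
  have hx₂ : (γ₂ t₂).1 = 0 := by simp [hγ₂]
  have hy₂ : (γ₂ t₂).2 = 0 := by simp [hγ₂]
  have hfin : Module.finrank ℝ (ℝ × ℝ) = 2 := by simp
  rcases hmn.lt_or_eq with hlt | rfl
  · have hv₁ : v₁.1 = 0 := h₁.fst.eq_zero_of_pow_add_pow_nonpos h₁.snd hx₁ hy₁ hlt hmax
    rcases Nat.even_or_odd m with he | ho
    · refine ⟨0, (zero_smul ℝ v₂).symm ▸ Prod.ext hv₁ ?_⟩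
      exact h₁.snd.eq_zero_of_even_pow_add_pow_nonpos he hy₁ hmax
    · have hfst : LinearMap.fst ℝ ℝ ℝ ≠ 0 := fun h => by
        simpa using LinearMap.congr_fun h (1, 0)
      exact Module.Dual.exists_smul_eq_of_apply_eq_zero hfin hfst hv₁
        (h₂.fst.eq_zero_of_odd_pow_add_pow_nonneg ho h₂.snd hx₂ hy₂ hlt hmin) hv₂
  · rcases Nat.even_or_odd m with he | ho
    · refine ⟨0, (zero_smul ℝ v₂).symm ▸ Prod.ext ?_ ?_⟩
      · exact h₁.fst.eq_zero_of_even_pow_add_pow_nonpos he hx₁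
          (hmax.mono fun s hs => by linarith)
      · exact h₁.snd.eq_zero_of_even_pow_add_pow_nonpos he hy₁ hmax
    · have hsum : LinearMap.fst ℝ ℝ ℝ + LinearMap.snd ℝ ℝ ℝ ≠ 0 := fun h => by
        simpa using LinearMap.congr_fun h (1, 0)
      have e₂ := h₂.fst.neg.add_eq_zero_of_odd_pow_add_pow_nonpos ho h₂.snd.neg
        (by simp [hx₂]) (by simp [hy₂]) (hmin.mono fun s hs => by
          simp only [Pi.neg_apply, ho.neg_pow]; linarith)
      exact Module.Dual.exists_smul_eq_of_apply_eq_zero hfin hsum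
        (h₁.fst.add_eq_zero_of_odd_pow_add_pow_nonpos ho h₁.snd hx₁ hy₁ hmax)
        (by simp only [LinearMap.add_apply, LinearMap.fst_apply, LinearMap.snd_apply]; linarith)
        hv₂

lemma exists_smul_eq_of_pow_add_pow_nonpos_nonneg (h₁ : HasDerivAt γ₁ v₁ t₁)
    (h₂ : HasDerivAt γ₂ v₂ t₂) (hγ₁ : γ₁ t₁ = 0) (hγ₂ : γ₂ t₂ = 0)
    (hv₂ : v₂ ≠ 0) (hmax : ∀ᶠ s in 𝓝 t₁, (γ₁ s).1 ^ m + (γ₁ s).2 ^ n ≤ 0)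
    (hmin : ∀ᶠ s in 𝓝 t₂, 0 ≤ (γ₂ s).1 ^ m + (γ₂ s).2 ^ n) : ∃ c : ℝ, v₁ = c • v₂ := by
  rcases le_total m n with hmn | hnm
  · exact exists_smul_eq_of_pow_add_pow_nonpos_nonneg_of_le hmn h₁ h₂ hγ₁ hγ₂ hv₂ hmax hmin
  · obtain ⟨c, hc⟩ := exists_smul_eq_of_pow_add_pow_nonpos_nonneg_of_le (γ₁ := fun s => (γ₁ s).swap)
      (γ₂ := fun s => (γ₂ s).swap) hnm (h₁.snd.prodMk h₁.fst)
      (h₂.snd.prodMk h₂.fst) (by simp [hγ₁]) (by simp [hγ₂])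
      (by simpa [Prod.ext_iff, and_comm] using hv₂)
      (hmax.mono fun s hs => by simp only [Prod.fst_swap, Prod.snd_swap]; linarith)
      (hmin.mono fun s hs => by simp only [Prod.fst_swap, Prod.snd_swap]; linarith)
    exact ⟨c, Prod.swap_injective hc⟩

end Tangents

/-- For positive integers `m, n`, the function `f(x, y) = x^m + y^n` never has a saddle
point at the origin. -/
theorem xm_add_yn_no_saddle (m n : ℕ) (hm : 0 < m) (hn : 0 < n) :
    ¬ HasSaddleAt Set.univ (fun q : ℝ × ℝ => q.1 ^ m + q.2 ^ n) (0, 0) := by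
  rintro ⟨a₁, b₁, a₂, b₂, t₁, t₂, γ₁, γ₂, hr₁, hr₂, ht₁, ht₂, hp₁, hp₂, htrans, -, hmax, hmin⟩
  obtain ⟨c, hc⟩ := exists_smul_eq_of_pow_add_pow_nonpos_nonneg (hr₁.2.2.2 t₁ ht₁).1.hasDerivAt
    (hr₂.2.2.2 t₂ ht₂).1.hasDerivAt hp₁ hp₂ (hr₂.2.2.2 t₂ ht₂).2
    (hmax.mono fun s hs => by simpa [hp₁, hm.ne', hn.ne'] using hs)
    (hmin.mono fun s hs => by simpa [hp₂, hm.ne', hn.ne'] using hs)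
  exact htrans c hc
end

section
/- Let n be an integer with n ≥ 2 and define g : ℝ² → ℝ by g(x,y) := Im((x + iy)^n), the imaginary part of the n-th power of the complex number x + iy. Then g has a strict saddle point at (0,0); moreover, for n = 1 the function g(x,y) = y does not have a saddle point at (0,0). -/
open Set Filter Topology

/-!
In polar form `g (r cos φ, r sin φ) = rⁿ sin (n φ)`. Along the spiral
`t ↦ t • (cos (θ - t), sin (θ - t))`, whose tangent at `0` is `(cos θ, sin θ)`, `g` becomes
`tⁿ sin (n (θ - t))`. For even `n` take `n θ = π / 2`, which gives `tⁿ cos (n t) > 0`; for odd `n`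
take `n θ = π`, which gives `tⁿ sin (n t) > 0` (along straight lines `tⁿ` changes sign, which is
why the direction has to turn). Replacing `θ` by `θ - π / n` flips the sign, and the two tangents
are transversal because `sin (π / n) ≠ 0`.

For `n = 1`, `g = y` has a nonzero differential `L`; both extremal paths have tangents in `ker L`,
which is a line, so they cannot be transversal.
-/

open Module in
theorem Module.Dual.exists_eq_smul_of_apply_eq_zero {K V : Type*} [DivisionRing K]
    [AddCommGroup V] [Module K V] [FiniteDimensional K V] (hV : finrank K V = 2)
    {f : Module.Dual K V} (hf : f ≠ 0) {u v : V} (hu : f u = 0) (hv : f v = 0) (hv₀ : v ≠ 0) :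
    ∃ c : K, u = c • v := by
  have hker : finrank K (LinearMap.ker f) = 1 := by
    have := f.finrank_ker_add_one_of_ne_zero hf
    omega
  obtain ⟨c, hc⟩ := (finrank_eq_one_iff_of_nonzero' (⟨v, hv⟩ : LinearMap.ker f)
    (fun h => hv₀ (congrArg Subtype.val h))).mp hker ⟨u, hu⟩
  exact ⟨c, congrArg Subtype.val hc.symm⟩

theorem not_hasSaddleAt_of_hasFDerivAt {D : Set (ℝ × ℝ)} {f : ℝ × ℝ → ℝ} {p : ℝ × ℝ}
    {L : (ℝ × ℝ) →L[ℝ] ℝ} (hf : HasFDerivAt f L p) (hL : L ≠ 0) : ¬ HasSaddleAt D f p := by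
  rintro ⟨a₁, b₁, a₂, b₂, t₁, t₂, γ₁, γ₂, hγ₁, hγ₂, ht₁, ht₂, rfl, hp₂, htransv, -, hmax, hmin⟩
  obtain ⟨hd₁, -⟩ := hγ₁.2.2.2 t₁ ht₁
  obtain ⟨hd₂, hγ₂'⟩ := hγ₂.2.2.2 t₂ ht₂
  have h₁ : L (deriv γ₁ t₁) = 0 := hmax.hasDerivAt_eq_zero (hf.comp_hasDerivAt t₁ hd₁.hasDerivAt)
  have h₂ : L (deriv γ₂ t₂) = 0 :=
    hmin.hasDerivAt_eq_zero ((hp₂ ▸ hf).comp_hasDerivAt t₂ hd₂.hasDerivAt)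
  obtain ⟨c, hc⟩ := Module.Dual.exists_eq_smul_of_apply_eq_zero (by simp)
    (f := (L : Module.Dual ℝ (ℝ × ℝ))) (by exact_mod_cast hL) h₁ h₂ hγ₂'
  exact htransv c hc

noncomputable def imPow (n : ℕ) (q : ℝ × ℝ) : ℝ := (((q.1 : ℂ) + (q.2 : ℂ) * Complex.I) ^ n).im

noncomputable def spiral (θ t : ℝ) : ℝ × ℝ := (t * Real.cos (θ - t), t * Real.sin (θ - t))

theorem spiral_zero (θ : ℝ) : spiral θ 0 = 0 := by simp [spiral]

theorem hasDerivAt_spiral (θ t : ℝ) :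
    HasDerivAt (spiral θ)
      (Real.cos (θ - t) + t * Real.sin (θ - t), Real.sin (θ - t) - t * Real.cos (θ - t)) t := by
  have hθ : HasDerivAt (fun t => θ - t) (-1) t := (hasDerivAt_id t).const_sub θ
  exact (((hasDerivAt_id' t).mul hθ.cos).congr_deriv (by ring)).prodMk
    (((hasDerivAt_id' t).mul hθ.sin).congr_deriv (by ring))

theorem deriv_spiral_zero (θ : ℝ) : deriv (spiral θ) 0 = (Real.cos θ, Real.sin θ) := by
  simp [(hasDerivAt_spiral θ 0).deriv]

theorem isRegularPath_spiral (θ : ℝ) {a b : ℝ} (hab : a < b) :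
    IsRegularPath Set.univ (spiral θ) a b := by
  refine ⟨hab, ?_, Set.mapsTo_univ _ _, fun t _ => ⟨(hasDerivAt_spiral θ t).differentiableAt, ?_⟩⟩
  · exact (continuous_iff_continuousAt.2 fun t => (hasDerivAt_spiral θ t).continuousAt).continuousOn
  · rw [(hasDerivAt_spiral θ t).deriv, Ne, Prod.ext_iff]
    rintro ⟨h₁, h₂⟩
    simp only [Prod.fst_zero, Prod.snd_zero] at h₁ h₂
    nlinarith [Real.sin_sq_add_cos_sq (θ - t), sq_nonneg t]

theorem imPow_comp_spiral (n : ℕ) (θ : ℝ) :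
    imPow n ∘ spiral θ = fun t => t ^ n * Real.sin (n * (θ - t)) := by
  funext t
  have hpolar : ((spiral θ t).1 : ℂ) + (spiral θ t).2 * Complex.I
      = t * (Complex.cos (θ - t) + Complex.sin (θ - t) * Complex.I) := by
    simp only [spiral]; push_cast; ring
  simp only [Function.comp_apply, imPow, hpolar, mul_pow, Complex.cos_add_sin_mul_I_pow]
  rw [← Complex.ofReal_pow, ← Complex.ofReal_natCast, ← Complex.ofReal_sub, ← Complex.ofReal_mul,
    ← Complex.ofReal_cos, ← Complex.ofReal_sin, Complex.im_ofReal_mul]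
  simp only [Complex.add_im, Complex.ofReal_im, Complex.mul_I_im, Complex.ofReal_re, zero_add]

theorem cos_sin_ne_smul {θ₁ θ₂ : ℝ} (h : Real.sin (θ₁ - θ₂) ≠ 0) (c : ℝ) :
    ((Real.cos θ₁, Real.sin θ₁) : ℝ × ℝ) ≠ c • (Real.cos θ₂, Real.sin θ₂) := by
  rw [Ne, Prod.ext_iff]
  rintro ⟨h₁, h₂⟩
  simp only [Prod.smul_mk, smul_eq_mul] at h₁ h₂
  exact h (by rw [Real.sin_sub, h₁, h₂]; ring)

theorem hasStrictSaddleAt_of_spiral {f : ℝ × ℝ → ℝ} {θ₁ θ₂ : ℝ} (hθ : Real.sin (θ₂ - θ₁) ≠ 0)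
    (hmax : IsStrictLocalMax (f ∘ spiral θ₁) 0) (hmin : IsStrictLocalMin (f ∘ spiral θ₂) 0) :
    HasStrictSaddleAt Set.univ f (0, 0) := by
  have hθ' : Real.sin (θ₁ - θ₂) ≠ 0 := by rwa [← neg_sub, Real.sin_neg, neg_ne_zero]
  refine ⟨-1, 1, -1, 1, 0, 0, spiral θ₁, spiral θ₂, isRegularPath_spiral θ₁ (by norm_num),
    isRegularPath_spiral θ₂ (by norm_num), by norm_num, by norm_num, spiral_zero θ₁,
    spiral_zero θ₂, ?_, ?_, hmax, hmin⟩ <;> rw [deriv_spiral_zero, deriv_spiral_zero]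
  exacts [cos_sin_ne_smul hθ', cos_sin_ne_smul hθ]

theorem IsStrictLocalMin.neg {g : ℝ → ℝ} {t : ℝ} (h : IsStrictLocalMin g t) :
    IsStrictLocalMax (-g) t :=
  h.mono fun _ hs => neg_lt_neg hs

theorem eventually_pow_mul_cos_pos {n : ℕ} (hn : Even n) (c : ℝ) :
    ∀ᶠ t in 𝓝[≠] (0 : ℝ), 0 < t ^ n * Real.cos (c * t) := by
  have hcos : ∀ᶠ t in 𝓝 (0 : ℝ), 0 < Real.cos (c * t) :=
    (Real.continuous_cos.comp (continuous_const.mul continuous_id)).tendsto' 0 1 (by simp)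
      |>.eventually_const_lt one_pos
  filter_upwards [nhdsWithin_le_nhds hcos, self_mem_nhdsWithin] with t hct ht
  exact mul_pos (hn.pow_pos ht) hct

theorem eventually_pow_mul_sin_pos {n : ℕ} (hn : Odd n) {c : ℝ} (hc : 0 < c) :
    ∀ᶠ t in 𝓝[≠] (0 : ℝ), 0 < t ^ n * Real.sin (c * t) := by
  have hπ : 0 < Real.pi / c := div_pos Real.pi_pos hc
  rw [← nhdsLT_sup_nhdsGT, eventually_sup]
  constructor
  · filter_upwards [Ioo_mem_nhdsLT (neg_lt_zero.mpr hπ)] with t ⟨ht₁, ht₂⟩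
    rw [neg_div', div_lt_iff₀ hc] at ht₁
    exact mul_pos_of_neg_of_neg (hn.pow_neg ht₂)
      (Real.sin_neg_of_neg_of_neg_pi_lt (mul_neg_of_pos_of_neg hc ht₂) (by linarith))
  · filter_upwards [Ioo_mem_nhdsGT hπ] with t ⟨ht₁, ht₂⟩
    rw [lt_div_iff₀ hc] at ht₂
    exact mul_pos (pow_pos ht₁ n) (Real.sin_pos_of_pos_of_lt_pi (mul_pos hc ht₁) (by linarith))

theorem exists_isStrictLocalMin_imPow_comp_spiral {n : ℕ} (hn : n ≠ 0) :
    ∃ θ, IsStrictLocalMin (imPow n ∘ spiral θ) 0 := by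
  have hn' : (n : ℝ) ≠ 0 := Nat.cast_ne_zero.mpr hn
  unfold IsStrictLocalMin
  simp only [imPow_comp_spiral, zero_pow hn, zero_mul]
  rcases Nat.even_or_odd n with he | ho
  · refine ⟨Real.pi / (2 * n), ?_⟩
    filter_upwards [eventually_pow_mul_cos_pos he n] with t ht
    rwa [show (n : ℝ) * (Real.pi / (2 * n) - t) = Real.pi / 2 - n * t by field_simp,
      Real.sin_pi_div_two_sub]
  · refine ⟨Real.pi / n, ?_⟩
    filter_upwards [eventually_pow_mul_sin_pos ho (Nat.cast_pos.mpr (Nat.pos_of_ne_zero hn))]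
      with t ht
    rwa [show (n : ℝ) * (Real.pi / n - t) = Real.pi - n * t by field_simp, Real.sin_pi_sub]

theorem imPow_comp_spiral_sub_pi_div {n : ℕ} (hn : n ≠ 0) (θ : ℝ) :
    imPow n ∘ spiral (θ - Real.pi / n) = -(imPow n ∘ spiral θ) := by
  have hn' : (n : ℝ) ≠ 0 := Nat.cast_ne_zero.mpr hn
  funext t
  simp only [imPow_comp_spiral, Pi.neg_apply]
  rw [show (n : ℝ) * (θ - Real.pi / n - t) = n * (θ - t) - Real.pi by field_simp; ring,
    Real.sin_sub_pi, mul_neg]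

theorem hasStrictSaddleAt_imPow {n : ℕ} (hn : 2 ≤ n) :
    HasStrictSaddleAt Set.univ (imPow n) (0, 0) := by
  have hn₀ : n ≠ 0 := by omega
  obtain ⟨θ, hmin⟩ := exists_isStrictLocalMin_imPow_comp_spiral hn₀
  refine hasStrictSaddleAt_of_spiral (θ₁ := θ - Real.pi / n) ?_ ?_ hmin
  · rw [sub_sub_cancel]
    exact (Real.sin_pos_of_pos_of_lt_pi (by positivity)
      (div_lt_self Real.pi_pos (by exact_mod_cast hn))).ne'
  · rw [imPow_comp_spiral_sub_pi_div hn₀]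
    exact hmin.neg

theorem not_hasSaddleAt_imPow_one : ¬ HasSaddleAt Set.univ (imPow 1) (0, 0) := by
  have hsnd : imPow 1 = Prod.snd := funext fun q => by simp [imPow]
  rw [hsnd]
  exact not_hasSaddleAt_of_hasFDerivAt hasFDerivAt_snd
    (DFunLike.ne_iff.mpr ⟨(0, 1), by simp⟩)

/-- For `n ≥ 2`, the function `g(x, y) = Im((x + iy)^n)` has a strict saddle point at the
origin; moreover, for `n = 1` the function `g(x, y) = Im(x + iy) = y` does not have a
saddle point at the origin. -/
theorem im_power_saddle (n : ℕ) (hn : 2 ≤ n) :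
    HasStrictSaddleAt Set.univ
      (fun q : ℝ × ℝ => (((q.1 : ℂ) + (q.2 : ℂ) * Complex.I) ^ n).im) (0, 0) ∧
    ¬ HasSaddleAt Set.univ
      (fun q : ℝ × ℝ => (((q.1 : ℂ) + (q.2 : ℂ) * Complex.I) ^ 1).im) (0, 0) :=
  ⟨hasStrictSaddleAt_imPow hn, not_hasSaddleAt_imPow_one⟩
end
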